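/- arXiv:2506.23381 — 2 statements merged into one kernel-verified Lean document; each statement's English description precedes it below -/
import Mathlib

section
/- Let H be a real Hilbert space, and let H = C ⊕ Λ be an orthogonal decomposition into closed subspaces C and Λ with Λ finite-dimensional. Let L ⊆ H be a subspace, and define γ := sup over λ ∈ Λ with ‖λ‖ = 1 of inf over λ_h ∈ L with λ − λ_h ∈ C of ‖λ − λ_h‖ (taking the inf to be +∞ if no such λ_h exists; assume γ < ∞). Then for every g ∈ H orthogonal to L, and every ξ ∈ H, one has ⟨g, ξ⟩ ≤ √(1 + γ²) · (sup over c ∈ C with ‖c‖ = 1 of ⟨g, c⟩) · ‖ξ‖. -/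
/-!
Write `S` for the norm of `⟪g, ·⟫` on `C`, so `⟪g, c⟫ ≤ S ‖c‖` on `C`. For `λ ∈ Λ` and any
admissible `λ_h ∈ L`, orthogonality of `g` to `L` gives `⟪g, λ⟫ = ⟪g, λ - λ_h⟫ ≤ S ‖λ - λ_h‖`,
hence `⟪g, λ⟫ ≤ S γ ‖λ‖`. Splitting `ξ = c + λ` along `H = C ⊕ Λ` and applying Cauchy–Schwarz
in `ℝ²` to `‖c‖ + γ ‖λ‖` gives the bound. Finite dimensionality of `Λ` is what makes `γ` a genuine
supremum: admissible lifts can be chosen linearly in `λ`, hence with norm `O(‖λ‖)`.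
-/

open RealInnerProductSpace

theorem add_mul_le_sqrt_one_add_sq_mul_sqrt (a b γ : ℝ) :
    a + γ * b ≤ √(1 + γ ^ 2) * √(a ^ 2 + b ^ 2) := by
  rw [← Real.sqrt_mul (by positivity)]
  exact Real.le_sqrt_of_sq_le (by nlinarith [sq_nonneg (γ * a - b)])

section LinearLift

variable {K V : Type*} [Field K] [AddCommGroup V] [Module K V]

theorem Submodule.exists_linearMap_mem_and_sub_mem (Λ L C : Submodule K V)
    (hne : ∀ l ∈ Λ, ∃ lh ∈ L, l - lh ∈ C) :
    ∃ φ : Λ →ₗ[K] V, ∀ l : Λ, φ l ∈ L ∧ (l : V) - φ l ∈ C := by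
  let b := Module.Basis.ofVectorSpace K Λ
  choose f hfL hfC using fun i => hne (b i) (b i).2
  let φ : Λ →ₗ[K] V := b.constr K f
  let admissible : Submodule K Λ := L.comap φ ⊓ C.comap (Λ.subtype - φ)
  have h_top : admissible = ⊤ := by
    rw [eq_top_iff, ← b.span_eq, Submodule.span_le]
    rintro _ ⟨i, rfl⟩
    exact ⟨by simpa [φ] using hfL i, by simpa [φ] using hfC i⟩
  refine ⟨φ, fun l => ?_⟩
  have hl : l ∈ admissible := h_top ▸ Submodule.mem_top
  exact ⟨hl.1, hl.2⟩

end LinearLift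

section InnerProduct

variable {H : Type*} [NormedAddCommGroup H] [InnerProductSpace ℝ H]

theorem Submodule.exists_bound_sub_mem (Λ L C : Submodule ℝ H) [FiniteDimensional ℝ Λ]
    (hne : ∀ l ∈ Λ, ∃ lh ∈ L, l - lh ∈ C) :
    ∃ M : ℝ, ∀ l ∈ Λ, ∃ lh ∈ L, l - lh ∈ C ∧ ‖l - lh‖ ≤ M * ‖l‖ := by
  obtain ⟨φ, hφ⟩ := Submodule.exists_linearMap_mem_and_sub_mem Λ L C hne
  let ψ := LinearMap.toContinuousLinearMap (Λ.subtype - φ)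
  exact ⟨‖ψ‖, fun l hl => ⟨φ ⟨l, hl⟩, (hφ ⟨l, hl⟩).1, (hφ ⟨l, hl⟩).2, ψ.le_opNorm ⟨l, hl⟩⟩⟩

/-- The norm of the functional `⟪g, ·⟫` restricted to `K` (it is `0` when `K = ⊥`). -/
noncomputable def innerSupOnSphere (K : Submodule ℝ H) (g : H) : ℝ :=
  sSup {r : ℝ | ∃ c ∈ K, ‖c‖ = 1 ∧ r = ⟪g, c⟫}

theorem bddAbove_inner_sphere (K : Submodule ℝ H) (g : H) :
    BddAbove {r : ℝ | ∃ c ∈ K, ‖c‖ = 1 ∧ r = ⟪g, c⟫} := by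
  refine ⟨‖g‖, ?_⟩
  rintro _ ⟨c, -, hc1, rfl⟩
  simpa [hc1] using real_inner_le_norm g c

theorem inner_le_innerSupOnSphere_mul_norm {K : Submodule ℝ H} (g : H) {c : H} (hc : c ∈ K) :
    ⟪g, c⟫ ≤ innerSupOnSphere K g * ‖c‖ := by
  rcases eq_or_ne c 0 with rfl | hc0
  · simp
  have h_unit : ⟪g, ‖c‖⁻¹ • c⟫ ≤ innerSupOnSphere K g :=
    le_csSup (bddAbove_inner_sphere K g) ⟨_, K.smul_mem _ hc, norm_smul_inv_norm hc0, rfl⟩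
  rwa [real_inner_smul_right, inv_mul_le_iff₀ (norm_pos_iff.2 hc0), mul_comm] at h_unit

theorem innerSupOnSphere_nonneg (K : Submodule ℝ H) (g : H) : 0 ≤ innerSupOnSphere K g := by
  by_cases hK : ∃ c ∈ K, c ≠ 0
  · obtain ⟨c, hc, hc0⟩ := hK
    have h_pos := inner_le_innerSupOnSphere_mul_norm g hc
    have h_neg := inner_le_innerSupOnSphere_mul_norm g (K.neg_mem hc)
    rw [inner_neg_right, norm_neg] at h_neg
    exact nonneg_of_mul_nonneg_left (by linarith) (norm_pos_iff.2 hc0)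
  · push Not at hK
    have h_empty : {r : ℝ | ∃ c ∈ K, ‖c‖ = 1 ∧ r = ⟪g, c⟫} = ∅ :=
      Set.eq_empty_of_forall_notMem fun _ ⟨c, hc, hc1, _⟩ => by simp [hK c hc] at hc1
    simp [innerSupOnSphere, h_empty]

noncomputable def liftDist (L C : Submodule ℝ H) (l : H) : ℝ :=
  sInf {s : ℝ | ∃ lh ∈ L, l - lh ∈ C ∧ s = ‖l - lh‖}

/-- The paper's `γ`. -/
noncomputable def liftConstant (Λ L C : Submodule ℝ H) : ℝ :=
  sSup {r : ℝ | ∃ l ∈ Λ, ‖l‖ = 1 ∧ r = liftDist L C l}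

theorem liftDist_le {L C : Submodule ℝ H} {l lh : H} (hL : lh ∈ L) (hC : l - lh ∈ C) :
    liftDist L C l ≤ ‖l - lh‖ :=
  csInf_le ⟨0, by rintro _ ⟨_, -, -, rfl⟩; positivity⟩ ⟨lh, hL, hC, rfl⟩

theorem inner_le_innerSupOnSphere_mul_liftDist {L C : Submodule ℝ H} {g l : H}
    (hg : ∀ lh ∈ L, ⟪g, lh⟫ = 0) (hl : ∃ lh ∈ L, l - lh ∈ C) :
    ⟪g, l⟫ ≤ innerSupOnSphere C g * liftDist L C l := by
  obtain ⟨lh₀, hL₀, hC₀⟩ := hl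
  rw [liftDist, ← smul_eq_mul, ← Real.sInf_smul_of_nonneg (innerSupOnSphere_nonneg C g)]
  refine le_csInf (Set.Nonempty.smul_set ⟨_, lh₀, hL₀, hC₀, rfl⟩) ?_
  rintro _ ⟨_, ⟨lh, hL, hC, rfl⟩, rfl⟩
  calc ⟪g, l⟫ = ⟪g, l - lh⟫ := by rw [inner_sub_right, hg lh hL, sub_zero]
    _ ≤ innerSupOnSphere C g * ‖l - lh‖ := inner_le_innerSupOnSphere_mul_norm g hC

theorem bddAbove_liftDist_sphere (Λ L C : Submodule ℝ H) [FiniteDimensional ℝ Λ]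
    (hne : ∀ l ∈ Λ, ∃ lh ∈ L, l - lh ∈ C) :
    BddAbove {r : ℝ | ∃ l ∈ Λ, ‖l‖ = 1 ∧ r = liftDist L C l} := by
  obtain ⟨M, hM⟩ := Submodule.exists_bound_sub_mem Λ L C hne
  refine ⟨M, ?_⟩
  rintro _ ⟨l, hl, hl1, rfl⟩
  obtain ⟨lh, hL, hC, hle⟩ := hM l hl
  simpa [hl1] using (liftDist_le hL hC).trans hle

theorem inner_le_innerSupOnSphere_mul_liftConstant_mul_norm {Λ L C : Submodule ℝ H}
    [FiniteDimensional ℝ Λ] (hne : ∀ l ∈ Λ, ∃ lh ∈ L, l - lh ∈ C) {g l : H}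
    (hg : ∀ lh ∈ L, ⟪g, lh⟫ = 0) (hl : l ∈ Λ) :
    ⟪g, l⟫ ≤ innerSupOnSphere C g * liftConstant Λ L C * ‖l‖ := by
  rcases eq_or_ne l 0 with rfl | hl0
  · simp
  have hu : ‖l‖⁻¹ • l ∈ Λ := Λ.smul_mem _ hl
  have h_dist : liftDist L C (‖l‖⁻¹ • l) ≤ liftConstant Λ L C :=
    le_csSup (bddAbove_liftDist_sphere Λ L C hne) ⟨_, hu, norm_smul_inv_norm hl0, rfl⟩
  have h_unit := (inner_le_innerSupOnSphere_mul_liftDist hg (hne _ hu)).trans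
    (mul_le_mul_of_nonneg_left h_dist (innerSupOnSphere_nonneg C g))
  rwa [real_inner_smul_right, inv_mul_le_iff₀ (norm_pos_iff.2 hl0), mul_comm] at h_unit

theorem norm_add_mul_norm_le_of_inner_eq_zero {x y : H} (h : ⟪x, y⟫ = 0) (γ : ℝ) :
    ‖x‖ + γ * ‖y‖ ≤ √(1 + γ ^ 2) * ‖x + y‖ := by
  have h_pythagoras : ‖x + y‖ = √(‖x‖ ^ 2 + ‖y‖ ^ 2) := by
    rw [sq, sq, ← norm_add_sq_eq_norm_sq_add_norm_sq_real h, Real.sqrt_mul_self (norm_nonneg _)]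
  rw [h_pythagoras]
  exact add_mul_le_sqrt_one_add_sq_mul_sqrt _ _ _

end InnerProduct

/-- Abstract form of the topological-correction bound: with `H = C ⊕ Λ` an orthogonal
decomposition (`Λ = Cᗮ` finite-dimensional), `L ⊆ H` a subspace, and
`γ = sup_{λ ∈ Λ, ‖λ‖=1} inf {‖λ − λ_h‖ : λ_h ∈ L, λ − λ_h ∈ C}`, every `g ⊥ L` satisfies
`⟪g, ξ⟫ ≤ √(1+γ²) · sup_{c ∈ C, ‖c‖=1} ⟪g, c⟫ · ‖ξ‖`. -/
theorem stmt_3 {H : Type*} [NormedAddCommGroup H] [InnerProductSpace ℝ H] [CompleteSpace H]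
    (C Λ L : Submodule ℝ H) (hC : IsClosed (C : Set H)) (hΛ : Λ = Cᗮ)
    [FiniteDimensional ℝ Λ]
    (hne : ∀ l ∈ Λ, ∃ lh ∈ L, l - lh ∈ C)
    (γ : ℝ)
    (hγ : γ = sSup {r : ℝ | ∃ l ∈ Λ, ‖l‖ = 1 ∧
        r = sInf {s : ℝ | ∃ lh ∈ L, l - lh ∈ C ∧ s = ‖l - lh‖}})
    (g ξ : H) (hg : ∀ l ∈ L, ⟪g, l⟫ = 0) :
    ⟪g, ξ⟫ ≤ Real.sqrt (1 + γ ^ 2) *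
      sSup {r : ℝ | ∃ c ∈ C, ‖c‖ = 1 ∧ r = ⟪g, c⟫} * ‖ξ‖ := by
  change ⟪g, ξ⟫ ≤ √(1 + γ ^ 2) * innerSupOnSphere C g * ‖ξ‖
  have : CompleteSpace C := hC.completeSpace_coe
  obtain ⟨c, hc, l, hl, rfl⟩ := Submodule.exists_add_mem_mem_orthogonal (K := C) ξ
  have hlΛ : l ∈ Λ := hΛ ▸ hl
  have h_Λ : ⟪g, l⟫ ≤ innerSupOnSphere C g * γ * ‖l‖ := by
    rw [hγ]
    exact inner_le_innerSupOnSphere_mul_liftConstant_mul_norm hne hg hlΛ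
  calc ⟪g, c + l⟫ = ⟪g, c⟫ + ⟪g, l⟫ := inner_add_right _ _ _
    _ ≤ innerSupOnSphere C g * (‖c‖ + γ * ‖l‖) := by
      linarith [inner_le_innerSupOnSphere_mul_norm g hc]
    _ ≤ innerSupOnSphere C g * (√(1 + γ ^ 2) * ‖c + l‖) :=
      mul_le_mul_of_nonneg_left (norm_add_mul_norm_le_of_inner_eq_zero (hl c hc) γ)
        (innerSupOnSphere_nonneg C g)
    _ = √(1 + γ ^ 2) * innerSupOnSphere C g * ‖c + l‖ := by ring
end

section
/- Let H be a real Hilbert space, u, g ∈ H, V a closed subspace of H with u ∈ V, and W = V^⊥. Suppose additionally A is a bound such that sup over unit w ∈ W of ⟨g, w⟩ ≤ B. Then ‖u − g‖² ≤ (sup over unit v ∈ V of ⟨u − g, v⟩)² + B². In particular with V = ∇H¹_{Γ_D} this yields the generalized Prager–Synge estimate: the squared error is bounded by the square of the conforming residual functional norm plus the square of the bound on the nonconformity functional. -/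
/-!
Split `u - g` orthogonally along `V ⊕ Vᗮ`. The supremum of `⟪x, v⟫` over unit vectors `v` of a
closed subspace `K` is exactly the norm of the orthogonal projection of `x` onto `K`, so the two
suprema in the statement are `‖P_V (u - g)‖` and `‖P_{Vᗮ} g‖`; the latter is also
`‖P_{Vᗮ} (u - g)‖` because `u ∈ V`. Pythagoras concludes.
-/

open RealInnerProductSpace

namespace Submodule

variable {H : Type*} [NormedAddCommGroup H] [InnerProductSpace ℝ H]

theorem inner_starProjection_left_of_mem (K : Submodule ℝ H) [K.HasOrthogonalProjection]
    (x : H) {v : H} (hv : v ∈ K) : ⟪K.starProjection x, v⟫ = ⟪x, v⟫ := by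
  rw [inner_starProjection_left_eq_right, starProjection_eq_self_iff.mpr hv]

theorem sSup_inner_unit_eq_norm_starProjection (K : Submodule ℝ H) [K.HasOrthogonalProjection]
    (x : H) : sSup {r : ℝ | ∃ v ∈ K, ‖v‖ = 1 ∧ r = ⟪x, v⟫} = ‖K.starProjection x‖ := by
  set p := K.starProjection x
  have hpK : p ∈ K := K.starProjection_apply_mem x
  have hinner : ∀ v ∈ K, ⟪x, v⟫ = ⟪p, v⟫ := fun v hv ↦
    (K.inner_starProjection_left_of_mem x hv).symm
  have hle : ∀ r ∈ {r : ℝ | ∃ v ∈ K, ‖v‖ = 1 ∧ r = ⟪x, v⟫}, r ≤ ‖p‖ := by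
    rintro _ ⟨v, hv, hv1, rfl⟩
    calc ⟪x, v⟫ = ⟪p, v⟫ := hinner v hv
      _ ≤ ‖p‖ * ‖v‖ := real_inner_le_norm p v
      _ = ‖p‖ := by rw [hv1, mul_one]
  refine le_antisymm (Real.sSup_le hle (norm_nonneg p)) ?_
  rcases eq_or_ne p 0 with hp | hp
  · -- the set is then `∅` or `{0}`; `sSup ∅ = 0` makes both cases work
    rw [hp, norm_zero]
    refine Real.sSup_nonneg ?_
    rintro _ ⟨v, hv, -, rfl⟩
    rw [hinner v hv, hp, inner_zero_left]
  · refine le_csSup ⟨‖p‖, hle⟩ ⟨‖p‖⁻¹ • p, K.smul_mem _ hpK, norm_smul_inv_norm hp, ?_⟩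
    have hp' : ‖p‖ ≠ 0 := norm_ne_zero_iff.mpr hp
    rw [real_inner_smul_right, hinner p hpK, real_inner_self_eq_norm_sq]
    field_simp

end Submodule

/-- Generalized Prager–Synge estimate, abstract form: if `u ∈ V` (closed subspace) and
the nonconformity functional is bounded, `sup_{w ∈ Vᗮ, ‖w‖=1} ⟪g, w⟫ ≤ B`, then
`‖u − g‖² ≤ (sup_{v ∈ V, ‖v‖=1} ⟪u − g, v⟫)² + B²`. -/
theorem stmt_4 {H : Type*} [NormedAddCommGroup H] [InnerProductSpace ℝ H] [CompleteSpace H]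
    (V : Submodule ℝ H) (hV : IsClosed (V : Set H)) (u g : H) (hu : u ∈ V) (B : ℝ)
    (hB : sSup {r : ℝ | ∃ w ∈ Vᗮ, ‖w‖ = 1 ∧ r = ⟪g, w⟫} ≤ B) :
    ‖u - g‖ ^ 2 ≤ (sSup {r : ℝ | ∃ v ∈ V, ‖v‖ = 1 ∧ r = ⟪u - g, v⟫}) ^ 2 + B ^ 2 := by
  have : CompleteSpace V := hV.completeSpace_coe
  have hW : Vᗮ.starProjection (u - g) = -Vᗮ.starProjection g := by
    rw [map_sub, (Vᗮ.starProjection_apply_eq_zero_iff).mpr (V.le_orthogonal_orthogonal hu),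
      zero_sub]
  rw [Submodule.sSup_inner_unit_eq_norm_starProjection] at hB ⊢
  rw [Submodule.norm_sq_eq_add_norm_sq_starProjection (u - g) V, hW, norm_neg]
  gcongr
end
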